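/- Let Z be a square-integrable random vector in R^k, M a positive integer, and consider all (possibly stochastic) maps φ: R^k → {0,...,M-1}. For each φ let Z̃ = E[Z | φ(Z)]. If φ* minimizes E[‖Z − Z̃‖²] over this class, with corresponding estimate Z̃*, then E[‖Z − Z̃*‖²] = W₂²(p_Z, p_{Z̃*}), i.e., the minimum MSE equals the squared Wasserstein-2 distance between the source distribution and the distribution of the optimal MMSE estimate. -/

import Mathlib

/-!
The estimate `Z̃* = E[Z | J]` takes at most `M` values `g 0, …, g (M - 1)`. The joint law of
`(Z, Z̃*)` is a coupling of cost equal to the MSE, so `W₂² ≤ MSE`. Conversely, every coupling `ν`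
of `p_Z` and `p_{Z̃*}` is itself a stochastic `M`-level quantizer: draw `(X, Y) ∼ ν` and output
the index `i` with `g i = Y`. Since conditional expectation is the best `L²` approximation by
functions of `i`, this quantizer has MSE at most `E‖X - g i‖² = E‖X - Y‖²`, and optimality of `J`
gives `MSE ≤` the cost of `ν`.
-/

open MeasureTheory ProbabilityTheory Real

noncomputable def W2sq {E : Type*} [MeasurableSpace E] [NormedAddCommGroup E]
    (p q : Measure E) : ℝ :=
  (⨅ γ : {γ : Measure (E × E) // γ.map Prod.fst = p ∧ γ.map Prod.snd = q},
    ∫⁻ z, (‖z.1 - z.2‖₊ : ENNReal) ^ 2 ∂(γ.1)).toReal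

open Set
open scoped ENNReal

lemma W2sq_eq_of_le_of_forall_le {E : Type*} [MeasurableSpace E] [NormedAddCommGroup E]
    {p q : Measure E} {c : ℝ} (hc : 0 ≤ c) {γ₀ : Measure (E × E)}
    (hγ₀ : γ₀.map Prod.fst = p ∧ γ₀.map Prod.snd = q)
    (hγ₀c : ∫⁻ z, (‖z.1 - z.2‖₊ : ℝ≥0∞) ^ 2 ∂γ₀ ≤ ENNReal.ofReal c)
    (hle : ∀ γ : Measure (E × E), γ.map Prod.fst = p → γ.map Prod.snd = q →
      ENNReal.ofReal c ≤ ∫⁻ z, (‖z.1 - z.2‖₊ : ℝ≥0∞) ^ 2 ∂γ) :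
    W2sq p q = c := by
  rw [W2sq, ← ENNReal.toReal_ofReal hc]
  congr 1
  exact le_antisymm ((iInf_le _ ⟨γ₀, hγ₀⟩).trans hγ₀c) (le_iInf fun γ ↦ hle γ.1 γ.2.1 γ.2.2)

lemma measurable_invFun_of_countable {β ι : Type*} [MeasurableSpace β]
    [MeasurableSingletonClass β] [MeasurableSpace ι] [Countable ι] [Nonempty ι] (g : ι → β) :
    Measurable (Function.invFun g) := by
  refine measurable_of_restrict_of_restrict_compl (countable_range g).measurableSet
    (have := (countable_range g).to_subtype; Measurable.of_discrete) ?_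
  have hconst : (range g)ᶜ.domRestrict (Function.invFun g) = fun _ ↦ Classical.choice ‹_› :=
    funext fun x ↦ Function.invFun_neg x.2
  rw [hconst]
  exact measurable_const

section L2

variable {α E : Type*} [NormedAddCommGroup E]

lemma ofReal_integral_norm_sq_eq_lintegral [MeasurableSpace α] {μ : Measure α} {f : α → E}
    (hf : MemLp f 2 μ) :
    ENNReal.ofReal (∫ a, ‖f a‖ ^ 2 ∂μ) = ∫⁻ a, (‖f a‖₊ : ℝ≥0∞) ^ 2 ∂μ := by
  rw [ofReal_integral_eq_lintegral_ofReal ((memLp_two_iff_integrable_sq_norm hf.1).1 hf)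
    (ae_of_all _ fun _ ↦ sq_nonneg _)]
  refine lintegral_congr fun a ↦ ?_
  rw [ENNReal.ofReal_pow (norm_nonneg _), ofReal_norm, enorm_eq_nnnorm]

variable [InnerProductSpace ℝ E]

lemma L2.norm_sub_sq_eq_integral_of_ae_eq [MeasurableSpace α] {μ : Measure α}
    {F G : α →₂[μ] E} {f g : α → E} (hF : F =ᵐ[μ] f) (hG : G =ᵐ[μ] g) :
    ‖F - G‖ ^ 2 = ∫ a, ‖f a - g a‖ ^ 2 ∂μ := by
  rw [← real_inner_self_eq_norm_sq, L2.inner_def]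
  refine integral_congr_ae ?_
  filter_upwards [Lp.coeFn_sub F G, hF, hG] with a hsub hFa hGa
  rw [real_inner_self_eq_norm_sq, hsub, Pi.sub_apply, hFa, hGa]

theorem integral_norm_sub_condExp_sq_le [CompleteSpace E] {m m0 : MeasurableSpace α}
    {μ : Measure[m0] α} [IsFiniteMeasure μ] (hm : m ≤ m0) {f g : α → E} (hf : MemLp f 2 μ)
    (hg : MemLp g 2 μ) (hgm : StronglyMeasurable[m] g) :
    ∫ a, ‖f a - μ[f | m] a‖ ^ 2 ∂μ ≤ ∫ a, ‖f a - g a‖ ^ 2 ∂μ := by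
  have : Fact (m ≤ m0) := ⟨hm⟩
  have hgL : hg.toLp g ∈ lpMeas E ℝ m 2 μ :=
    mem_lpMeas_iff_aestronglyMeasurable.2 ⟨g, hgm, hg.coeFn_toLp⟩
  have hproj : ‖hf.toLp f - condExpL2 E ℝ hm (hf.toLp f)‖ ≤ ‖hf.toLp f - hg.toLp g‖ := by
    rw [condExpL2, ← Submodule.starProjection_apply, Submodule.starProjection_minimal]
    have hbdd : BddBelow (range fun x : lpMeas E ℝ m 2 μ ↦ ‖hf.toLp f - (x : α →₂[μ] E)‖) :=
      ⟨0, forall_mem_range.2 fun _ ↦ norm_nonneg _⟩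
    exact ciInf_le hbdd ⟨hg.toLp g, hgL⟩
  rw [← L2.norm_sub_sq_eq_integral_of_ae_eq hf.coeFn_toLp
      (hf.condExpL2_ae_eq_condExp (𝕜 := ℝ) hm),
    ← L2.norm_sub_sq_eq_integral_of_ae_eq hf.coeFn_toLp hg.coeFn_toLp]
  exact pow_le_pow_left₀ (norm_nonneg _) hproj 2

end L2

lemma ofReal_integral_norm_sub_condExp_sq_le_lintegral {E ι : Type*} [NormedAddCommGroup E]
    [InnerProductSpace ℝ E] [CompleteSpace E] [MeasurableSpace E] [MeasurableSingletonClass E]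
    [MeasurableSpace ι] [DiscreteMeasurableSpace ι] [Finite ι] [Nonempty ι]
    {ν : Measure (E × E)} [IsFiniteMeasure ν] {g : ι → E} (hfst : MemLp Prod.fst 2 ν)
    (hsnd : ∀ᵐ z ∂ν, z.2 ∈ range g) :
    ENNReal.ofReal (∫ z, ‖z.1 -
        ν[Prod.fst | MeasurableSpace.comap (Function.invFun g ∘ Prod.snd) inferInstance] z‖ ^ 2 ∂ν)
      ≤ ∫⁻ z, (‖z.1 - z.2‖₊ : ℝ≥0∞) ^ 2 ∂ν := by
  set J := Function.invFun g ∘ Prod.snd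
  have hJ : Measurable J := (measurable_invFun_of_countable g).comp measurable_snd
  have hgJ : MemLp (g ∘ J) 2 ν := MemLp.of_discrete.comp_of_map hJ.aemeasurable
  have hgJm : StronglyMeasurable[MeasurableSpace.comap J inferInstance] (g ∘ J) :=
    StronglyMeasurable.of_discrete.comp_measurable (comap_measurable J)
  have hgJ_eq : g ∘ J =ᵐ[ν] Prod.snd := hsnd.mono fun z hz ↦ Function.invFun_eq hz
  calc _ ≤ ENNReal.ofReal (∫ z, ‖z.1 - (g ∘ J) z‖ ^ 2 ∂ν) :=
        ENNReal.ofReal_le_ofReal (integral_norm_sub_condExp_sq_le hJ.comap_le hfst hgJ hgJm)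
    _ = ∫⁻ z, (‖z.1 - (g ∘ J) z‖₊ : ℝ≥0∞) ^ 2 ∂ν :=
        ofReal_integral_norm_sq_eq_lintegral (hfst.sub hgJ)
    _ = ∫⁻ z, (‖z.1 - z.2‖₊ : ℝ≥0∞) ^ 2 ∂ν :=
        lintegral_congr_ae (hgJ_eq.mono fun z hz ↦ by simp only [hz])

theorem stmt0 {k M : ℕ}
    {Ω : Type} [MeasurableSpace Ω] (μ : Measure Ω) [IsProbabilityMeasure μ]
    (Z : Ω → EuclideanSpace ℝ (Fin k)) (J : Ω → Fin M)
    (hZmeas : Measurable Z) (hJmeas : Measurable J) (hZ2 : MemLp Z 2 μ)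
    (hopt : ∀ (Ω' : Type) (_ : MeasurableSpace Ω') (μ' : Measure Ω'),
      IsProbabilityMeasure μ' →
      ∀ (Z' : Ω' → EuclideanSpace ℝ (Fin k)) (J' : Ω' → Fin M),
        Measurable Z' → Measurable J' → μ'.map Z' = μ.map Z →
        ∫ ω, ‖Z ω - (μ[Z | MeasurableSpace.comap J inferInstance]) ω‖ ^ 2 ∂μ ≤
        ∫ ω, ‖Z' ω - (μ'[Z' | MeasurableSpace.comap J' inferInstance]) ω‖ ^ 2 ∂μ') :
    ∫ ω, ‖Z ω - (μ[Z | MeasurableSpace.comap J inferInstance]) ω‖ ^ 2 ∂μ =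
      W2sq (μ.map Z) (μ.map (μ[Z | MeasurableSpace.comap J inferInstance])) := by
  obtain ⟨g, -, hg⟩ := (stronglyMeasurable_condExp (m := MeasurableSpace.comap J inferInstance)
    (μ := μ) (f := Z)).exists_eq_measurable_comp
  set Zt := μ[Z | MeasurableSpace.comap J inferInstance]
  have : Nonempty (Fin M) := ⟨J (nonempty_of_isProbabilityMeasure μ).some⟩
  have hZt : Measurable Zt := hg ▸ Measurable.of_discrete.comp hJmeas
  refine (W2sq_eq_of_le_of_forall_le (integral_nonneg fun _ ↦ sq_nonneg _)
    ⟨Measure.fst_map_prodMk hZt, Measure.snd_map_prodMk hZmeas⟩ ?_ fun ν hν₁ hν₂ ↦ ?_).symm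
  · rw [lintegral_map (by fun_prop) (hZmeas.prodMk hZt)]
    exact (ofReal_integral_norm_sq_eq_lintegral (hZ2.sub (hZ2.condExp one_le_two))).ge
  have hZν : IdentDistrib Z Prod.fst μ ν :=
    ⟨hZmeas.aemeasurable, measurable_fst.aemeasurable, hν₁.symm⟩
  have hZtν : IdentDistrib Zt Prod.snd μ ν :=
    ⟨hZt.aemeasurable, measurable_snd.aemeasurable, hν₂.symm⟩
  have : IsProbabilityMeasure ν := (Measure.isProbabilityMeasure_map_iff
    measurable_fst.aemeasurable).1 (hν₁ ▸ Measure.isProbabilityMeasure_map hZmeas.aemeasurable)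
  have hsnd : ∀ᵐ z ∂ν, z.2 ∈ range g :=
    hZtν.ae_mem_snd (finite_range g).measurableSet
      (ae_of_all _ fun ω ↦ by rw [hg]; exact mem_range_self _)
  exact (ENNReal.ofReal_le_ofReal (hopt _ _ ν ‹_› Prod.fst _ measurable_fst
    ((measurable_invFun_of_countable g).comp measurable_snd) hν₁)).trans
    (ofReal_integral_norm_sub_condExp_sq_le_lintegral (hZν.memLp_snd hZ2) hsnd)
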